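/- Let H ∈ (0,1/2). There exists a constant C > 0 such that for every positive integer n and every b ∈ [0,1], |g_n(b)| ≤ C · n^{−2H}, where g_n(b) = ∫₀¹ ∫₀ᵗ ((1−b)(t−s)^{H−1/2} + b(⌊nt⌋/n − s)_+^{H−1/2}) k_n(s,t) ds dt. -/

import Mathlib

open MeasureTheory Real Set intervalIntegral

/-- Truncated power: `(x)_+^β = x^β` if `x > 0`, else `0`. -/
noncomputable def posPow (x β : ℝ) : ℝ := if 0 < x then x ^ β else 0

/-- The discretization kernel `k_n(s,t) = (t-s)^{H-1/2} - (⌊nt⌋/n - s)_+^{H-1/2}`. -/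
noncomputable def kn (H : ℝ) (n : ℕ) (s t : ℝ) : ℝ :=
  (t - s) ^ (H - 1/2) - posPow ((⌊(n : ℝ) * t⌋ : ℝ) / n - s) (H - 1/2)

/-- `g_n(b) = ∫₀¹∫₀ᵗ ((1-b)(t-s)^{H-1/2} + b(⌊nt⌋/n - s)_+^{H-1/2}) k_n(s,t) ds dt`. -/
noncomputable def gn (H : ℝ) (n : ℕ) (b : ℝ) : ℝ :=
  ∫ t in (0 : ℝ)..1, ∫ s in (0 : ℝ)..t,
    ((1 - b) * (t - s) ^ (H - 1/2)
      + b * posPow ((⌊(n : ℝ) * t⌋ : ℝ) / n - s) (H - 1/2)) * kn H n s t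

/-!
Fix `t ∈ (0,1]`, put `u = ⌊nt⌋/n ∈ [0,t]`, so that `t - u ≤ 1/n`, and `α = H - 1/2 < 0`.
For `s < u` the inner integrand is `((1-b)F + bK)(F - K)` with `F = (t-s)^α ≤ K = (u-s)^α`,
so its modulus is at most `K² - F²`; integrating over `[0,u]` gives at most
`(u^{2H} - t^{2H} + (t-u)^{2H})/(2H) ≤ (t-u)^{2H}/(2H)` by subadditivity of `x ↦ x^{2H}`.
For `s ≥ u` the integrand is `(1-b)(t-s)^{2α}`, whose integral over `[u,t]` is again at most
`(t-u)^{2H}/(2H)`. Hence every inner integral is bounded by `(t-u)^{2H}/H ≤ n^{-2H}/H`,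
and so is `g_n(b)`.
-/

lemma measurable_posPow (β : ℝ) : Measurable fun x => posPow x β :=
  Measurable.ite measurableSet_Ioi (by fun_prop) measurable_const

lemma posPow_of_pos {x : ℝ} (hx : 0 < x) (β : ℝ) : posPow x β = x ^ β := if_pos hx

lemma posPow_of_nonpos {x : ℝ} (hx : x ≤ 0) (β : ℝ) : posPow x β = 0 := if_neg hx.not_gt

lemma intervalIntegrable_const_sub_rpow {r : ℝ} (hr : -1 < r) (c a e : ℝ) :
    IntervalIntegrable (fun s => (c - s) ^ r) volume a e := by
  simpa using (intervalIntegrable_rpow' hr (a := c - a) (b := c - e)).comp_sub_left c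

lemma integral_const_sub_rpow {r : ℝ} (hr : -1 < r) (c a e : ℝ) :
    ∫ s in a..e, (c - s) ^ r = ((c - a) ^ (r + 1) - (c - e) ^ (r + 1)) / (r + 1) := by
  rw [integral_comp_sub_left (fun x => x ^ r) c, integral_rpow (Or.inl hr)]

lemma abs_convex_comb_mul_sub_le_sq_sub_sq {F K b : ℝ} (hF : 0 ≤ F) (hFK : F ≤ K)
    (hb0 : 0 ≤ b) (hb1 : b ≤ 1) :
    |((1 - b) * F + b * K) * (F - K)| ≤ K ^ 2 - F ^ 2 := by
  rw [abs_mul, abs_of_nonneg (by nlinarith), abs_of_nonpos (by linarith)]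
  nlinarith [mul_nonneg (sub_nonneg.2 hFK) (add_nonneg (mul_nonneg hb0 hF)
    (mul_nonneg (sub_nonneg.2 hb1) (hF.trans hFK)))]

lemma rpow_sq_eq_rpow_two_mul_sub_one {x : ℝ} (hx : 0 ≤ x) (H : ℝ) :
    (x ^ (H - 1/2)) ^ 2 = x ^ (2 * H - 1) := by
  rw [← rpow_mul_natCast hx]; ring_nf

/-- With `u = ⌊nt⌋/n` this is the integrand of `gn`. -/
noncomputable def kernelProduct (H b t u s : ℝ) : ℝ :=
  ((1 - b) * (t - s) ^ (H - 1/2) + b * posPow (u - s) (H - 1/2))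
    * ((t - s) ^ (H - 1/2) - posPow (u - s) (H - 1/2))

section kernelProduct

variable {H b t u : ℝ}

lemma measurable_kernelProduct : Measurable (kernelProduct H b t u) := by
  have := measurable_posPow (H - 1/2)
  unfold kernelProduct
  fun_prop

lemma kernelProduct_of_le {s : ℝ} (hus : u ≤ s) (hst : s ≤ t) :
    kernelProduct H b t u s = (1 - b) * (t - s) ^ (2 * H - 1) := by
  rw [kernelProduct, posPow_of_nonpos (by linarith), ← rpow_sq_eq_rpow_two_mul_sub_one
    (by linarith)]
  ring

lemma abs_kernelProduct_le (hH : H ≤ 1/2) (hb0 : 0 ≤ b) (hb1 : b ≤ 1) (hut : u ≤ t) {s : ℝ}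
    (hsu : s < u) :
    |kernelProduct H b t u s| ≤ (u - s) ^ (2 * H - 1) - (t - s) ^ (2 * H - 1) := by
  have hus : 0 < u - s := by linarith
  rw [kernelProduct, posPow_of_pos hus, ← rpow_sq_eq_rpow_two_mul_sub_one hus.le,
    ← rpow_sq_eq_rpow_two_mul_sub_one (by linarith)]
  exact abs_convex_comb_mul_sub_le_sq_sub_sq (rpow_nonneg (by linarith) _)
    (rpow_le_rpow_of_nonpos hus (by linarith) (by linarith)) hb0 hb1

lemma integral_const_sub_rpow_sub (hH : 0 < H) :
    ∫ s in (0 : ℝ)..u, ((u - s) ^ (2 * H - 1) - (t - s) ^ (2 * H - 1))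
      = (u ^ (2 * H) - t ^ (2 * H) + (t - u) ^ (2 * H)) / (2 * H) := by
  have hr : (-1 : ℝ) < 2 * H - 1 := by linarith
  rw [integral_sub (intervalIntegrable_const_sub_rpow hr _ _ _)
    (intervalIntegrable_const_sub_rpow hr _ _ _), integral_const_sub_rpow hr,
    integral_const_sub_rpow hr, sub_add_cancel, sub_self, zero_rpow (mul_pos two_pos hH).ne']
  simp only [sub_zero]
  ring

lemma ae_norm_kernelProduct_le (hH : H ≤ 1/2) (hb0 : 0 ≤ b) (hb1 : b ≤ 1) (hu0 : 0 ≤ u)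
    (hut : u ≤ t) :
    ∀ᵐ s ∂volume.restrict (uIoc 0 u),
      ‖kernelProduct H b t u s‖ ≤ (u - s) ^ (2 * H - 1) - (t - s) ^ (2 * H - 1) := by
  rw [uIoc_of_le hu0, Measure.restrict_congr_set Ioo_ae_eq_Ioc.symm]
  filter_upwards [ae_restrict_mem measurableSet_Ioo] with s hs
  exact abs_kernelProduct_le hH hb0 hb1 hut hs.2

lemma intervalIntegrable_const_sub_rpow_sub (hH : 0 < H) :
    IntervalIntegrable (fun s => (u - s) ^ (2 * H - 1) - (t - s) ^ (2 * H - 1)) volume 0 u :=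
  (intervalIntegrable_const_sub_rpow (by linarith) _ _ _).sub
    (intervalIntegrable_const_sub_rpow (by linarith) _ _ _)

lemma intervalIntegrable_kernelProduct_head (hH0 : 0 < H) (hH : H ≤ 1/2) (hb0 : 0 ≤ b)
    (hb1 : b ≤ 1) (hu0 : 0 ≤ u) (hut : u ≤ t) :
    IntervalIntegrable (kernelProduct H b t u) volume 0 u := by
  refine (intervalIntegrable_const_sub_rpow_sub (t := t) hH0).mono_fun
    measurable_kernelProduct.aestronglyMeasurable ?_
  filter_upwards [ae_norm_kernelProduct_le hH hb0 hb1 hu0 hut] with s hs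
  exact hs.trans (le_abs_self _)

lemma abs_integral_kernelProduct_head_le (hH0 : 0 < H) (hH : H ≤ 1/2) (hb0 : 0 ≤ b)
    (hb1 : b ≤ 1) (hu0 : 0 ≤ u) (hut : u ≤ t) :
    |∫ s in (0 : ℝ)..u, kernelProduct H b t u s| ≤ (t - u) ^ (2 * H) / (2 * H) := by
  have hsubadd : t ^ (2 * H) ≤ u ^ (2 * H) + (t - u) ^ (2 * H) := by
    simpa using rpow_add_le_add_rpow hu0 (sub_nonneg.2 hut) (by linarith) (by linarith)
  have hmono : u ^ (2 * H) ≤ t ^ (2 * H) := rpow_le_rpow hu0 hut (by linarith)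
  calc |∫ s in (0 : ℝ)..u, kernelProduct H b t u s|
      ≤ |(u ^ (2 * H) - t ^ (2 * H) + (t - u) ^ (2 * H)) / (2 * H)| := by
        simpa only [integral_const_sub_rpow_sub hH0, Real.norm_eq_abs] using
          norm_integral_le_abs_of_norm_le (ae_norm_kernelProduct_le hH hb0 hb1 hu0 hut)
            (intervalIntegrable_const_sub_rpow_sub hH0)
    _ ≤ (t - u) ^ (2 * H) / (2 * H) := by
        rw [abs_of_nonneg (div_nonneg (by linarith) (by linarith))]
        gcongr
        linarith

lemma integral_kernelProduct_tail (hH0 : 0 < H) (hut : u ≤ t) :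
    ∫ s in u..t, kernelProduct H b t u s = (1 - b) * ((t - u) ^ (2 * H) / (2 * H)) := by
  have hr : (-1 : ℝ) < 2 * H - 1 := by linarith
  rw [integral_congr (g := fun s => (1 - b) * (t - s) ^ (2 * H - 1)) fun s hs => by
      rw [uIcc_of_le hut] at hs; exact kernelProduct_of_le hs.1 hs.2,
    intervalIntegral.integral_const_mul, integral_const_sub_rpow hr, sub_self, sub_add_cancel,
    zero_rpow (mul_pos two_pos hH0).ne', sub_zero]

lemma intervalIntegrable_kernelProduct_tail (hH0 : 0 < H) (hut : u ≤ t) :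
    IntervalIntegrable (kernelProduct H b t u) volume u t := by
  refine (((intervalIntegrable_const_sub_rpow (r := 2 * H - 1) (by linarith) t u t).const_mul
    (1 - b))).congr_uIoo fun s hs => ?_
  rw [uIoo_of_le hut] at hs
  exact (kernelProduct_of_le hs.1.le hs.2.le).symm

lemma abs_integral_kernelProduct_le (hH0 : 0 < H) (hH : H ≤ 1/2) (hb0 : 0 ≤ b) (hb1 : b ≤ 1)
    (hu0 : 0 ≤ u) (hut : u ≤ t) :
    |∫ s in (0 : ℝ)..t, kernelProduct H b t u s| ≤ (t - u) ^ (2 * H) / H := by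
  rw [← integral_add_adjacent_intervals
      (intervalIntegrable_kernelProduct_head hH0 hH hb0 hb1 hu0 hut)
      (intervalIntegrable_kernelProduct_tail hH0 hut),
    integral_kernelProduct_tail hH0 hut]
  have hX : 0 ≤ (t - u) ^ (2 * H) / (2 * H) := by
    have := rpow_nonneg (sub_nonneg.2 hut) (2 * H)
    positivity
  calc _ ≤ (t - u) ^ (2 * H) / (2 * H) + |(1 - b) * ((t - u) ^ (2 * H) / (2 * H))| :=
        (abs_add_le _ _).trans
          (by gcongr; exact abs_integral_kernelProduct_head_le hH0 hH hb0 hb1 hu0 hut)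
    _ ≤ (t - u) ^ (2 * H) / (2 * H) + (t - u) ^ (2 * H) / (2 * H) := by
        rw [abs_of_nonneg (by bound)]
        gcongr
        exact mul_le_of_le_one_left hX (by linarith)
    _ = (t - u) ^ (2 * H) / H := by ring

end kernelProduct

lemma gn_eq_integral_kernelProduct (H : ℝ) (n : ℕ) (b : ℝ) :
    gn H n b = ∫ t in (0 : ℝ)..1, ∫ s in (0 : ℝ)..t,
      kernelProduct H b t ((⌊(n : ℝ) * t⌋ : ℝ) / n) s :=
  rfl

lemma floor_mul_div_mem {n : ℕ} (hn : 0 < n) {t : ℝ} (ht : 0 ≤ t) :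
    0 ≤ (⌊(n : ℝ) * t⌋ : ℝ) / n ∧ (⌊(n : ℝ) * t⌋ : ℝ) / n ≤ t ∧
      t - (⌊(n : ℝ) * t⌋ : ℝ) / n ≤ 1 / n := by
  have hn' : (0 : ℝ) < n := by exact_mod_cast hn
  have hlo := Int.floor_le ((n : ℝ) * t)
  have hhi := Int.lt_floor_add_one ((n : ℝ) * t)
  refine ⟨div_nonneg (by exact_mod_cast Int.floor_nonneg.2 (by positivity)) hn'.le, ?_, ?_⟩
  · rw [div_le_iff₀ hn']; linarith
  · rw [sub_le_iff_le_add, ← add_div, le_div_iff₀ hn']; linarith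

/-- Uniform-in-`b` bound `|g_n(b)| ≤ C n^{-2H}`. -/
theorem gn_uniform_bound (H : ℝ) (hH : H ∈ Ioo (0 : ℝ) (1/2)) :
    ∃ C : ℝ, 0 < C ∧ ∀ n : ℕ, 0 < n → ∀ b ∈ Icc (0 : ℝ) 1,
      |gn H n b| ≤ C * (n : ℝ) ^ (-(2*H)) := by
  obtain ⟨hH0, hH1⟩ := hH
  refine ⟨1 / H, by positivity, fun n hn b hb => ?_⟩
  have hinner : ∀ t ∈ uIoc (0 : ℝ) 1,
      ‖∫ s in (0 : ℝ)..t, kernelProduct H b t ((⌊(n : ℝ) * t⌋ : ℝ) / n) s‖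
        ≤ 1 / H * (n : ℝ) ^ (-(2 * H)) := by
    intro t ht
    rw [uIoc_of_le zero_le_one] at ht
    obtain ⟨hu0, hut, htu⟩ := floor_mul_div_mem hn ht.1.le
    have hpow : (t - (⌊(n : ℝ) * t⌋ : ℝ) / n) ^ (2 * H) ≤ (n : ℝ) ^ (-(2 * H)) := by
      rw [rpow_neg (Nat.cast_nonneg n), ← inv_rpow (Nat.cast_nonneg n), ← one_div]
      exact rpow_le_rpow (by linarith) htu (by linarith)
    calc _ ≤ (t - (⌊(n : ℝ) * t⌋ : ℝ) / n) ^ (2 * H) / H :=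
          abs_integral_kernelProduct_le hH0 hH1.le hb.1 hb.2 hu0 hut
      _ ≤ 1 / H * (n : ℝ) ^ (-(2 * H)) := by rw [one_div_mul_eq_div]; gcongr
  simpa [gn_eq_integral_kernelProduct, abs_of_nonneg] using
    norm_integral_le_of_norm_le_const hinner
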